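/- Let M be an additive abelian group and S a submonoid of M that is semisaturated in M. Then Int(S) is saturated in the following sense: for every m in the subgroup of M generated by S and every integer n ≥ 1, if n•m ∈ Int(S) then m ∈ Int(S). -/

import Mathlib

/-!
Write `m = a - b` with `a, b ∈ S`. Since `n • m` lies in the interior, `(k * n) • m = b + z` for
some `k` and `z ∈ S`; with `N = k * n` both `N • m` and `(N + 1) • m = z + a` lie in `S`. The
multiples `j` with `j • m ∈ S` form a submonoid of `ℕ` containing two consecutive integers, hence
all large integers, and semisaturation descends from large multiples down to `m` itself.
-/

/-- The *interior* of a subset `S` of an additive commutative monoid: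
`{x ∈ S | ∀ y ∈ S, ∃ n ∈ ℕ, ∃ z ∈ S, n • x = y + z}`. -/
def setInterior {M : Type*} [AddCommMonoid M] (S : Set M) : Set M :=
  {x | x ∈ S ∧ ∀ y ∈ S, ∃ n : ℕ, ∃ z ∈ S, n • x = y + z}

open Filter

theorem Nat.mem_addSubmonoid_of_mul_self_le {T : AddSubmonoid ℕ} {N j : ℕ} (hN : N ∈ T)
    (hN1 : N + 1 ∈ T) (hj : N * N ≤ j) : j ∈ T := by
  rcases N.eq_zero_or_pos with rfl | hNpos
  · simpa using T.nsmul_mem hN1 j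
  have hr : j % N < N := Nat.mod_lt j hNpos
  have hq : N ≤ j / N := (Nat.le_div_iff_mul_le hNpos).2 hj
  obtain ⟨d, hd⟩ := Nat.exists_eq_add_of_le (hr.le.trans hq)
  have hj_eq : j = d • N + (j % N) • (N + 1) := by
    rw [smul_eq_mul, smul_eq_mul]
    nth_rw 1 [← Nat.div_add_mod' j N, hd]
    ring
  rw [hj_eq]
  exact T.add_mem (T.nsmul_mem hN d) (T.nsmul_mem hN1 _)

theorem Nat.forall_pos_of_eventually_of_two_mul_three_mul {P : ℕ → Prop}
    (hP : ∀ j, P (2 * j) → P (3 * j) → P j) (hlarge : ∀ᶠ j in atTop, P j) :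
    ∀ j, 0 < j → P j := by
  obtain ⟨J, hJ⟩ := eventually_atTop.1 hlarge
  replace hJ : ∀ j, 0 < j → J ≤ j → P j := fun j _ hj => hJ j hj
  induction J with
  | zero => exact fun j hj => hJ j hj (Nat.zero_le j)
  | succ J ih =>
    refine ih fun j hj hJj => ?_
    rcases hJj.eq_or_lt with rfl | hlt
    · exact hP _ (hJ _ (by omega) (by omega)) (hJ _ (by omega) (by omega))
    · exact hJ j hj hlt

theorem AddSubmonoid.exists_sub_eq_of_mem_closure {M : Type*} [AddCommGroup M]
    (S : AddSubmonoid M) {m : M} (hm : m ∈ AddSubgroup.closure (S : Set M)) :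
    ∃ a ∈ S, ∃ b ∈ S, m = a - b := by
  induction hm using AddSubgroup.closure_induction with
  | mem x hx => exact ⟨x, hx, 0, S.zero_mem, (sub_zero x).symm⟩
  | zero => exact ⟨0, S.zero_mem, 0, S.zero_mem, (sub_zero 0).symm⟩
  | add x y _ _ hx hy =>
    obtain ⟨a, ha, b, hb, rfl⟩ := hx
    obtain ⟨c, hc, d, hd, rfl⟩ := hy
    exact ⟨a + c, S.add_mem ha hc, b + d, S.add_mem hb hd, by abel⟩
  | neg x _ hx =>
    obtain ⟨a, ha, b, hb, rfl⟩ := hx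
    exact ⟨b, hb, a, ha, neg_sub a b⟩

theorem mem_setInterior_of_nsmul_mem_setInterior {M : Type*} [AddCommMonoid M] {S : Set M}
    {x : M} {n : ℕ} (hx : x ∈ S) (hnx : n • x ∈ setInterior S) : x ∈ setInterior S := by
  refine ⟨hx, fun y hy => ?_⟩
  obtain ⟨k, z, hz, hk⟩ := hnx.2 y hy
  exact ⟨k * n, z, hz, by rwa [mul_smul]⟩

namespace AddSubmonoid

variable {M : Type*} [AddCommGroup M]

def IsSemisaturated (S : AddSubmonoid M) : Prop :=
  ∀ m : M, 2 • m ∈ S → 3 • m ∈ S → m ∈ S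

theorem IsSemisaturated.mem_of_eventually_nsmul_mem {S : AddSubmonoid M}
    (hS : S.IsSemisaturated) {m : M} (h : ∀ᶠ j : ℕ in atTop, j • m ∈ S) : m ∈ S := by
  have hpos := Nat.forall_pos_of_eventually_of_two_mul_three_mul (P := fun j => j • m ∈ S)
    (fun j h2 h3 => hS _ (by rwa [← mul_smul]) (by rwa [← mul_smul])) h
  simpa using hpos 1 one_pos

theorem IsSemisaturated.mem_of_nsmul_mem_setInterior {S : AddSubmonoid M}
    (hS : S.IsSemisaturated) {m : M} (hm : m ∈ AddSubgroup.closure (S : Set M)) {n : ℕ}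
    (hnm : n • m ∈ setInterior (S : Set M)) : m ∈ S := by
  obtain ⟨a, ha, b, hb, rfl⟩ := S.exists_sub_eq_of_mem_closure hm
  obtain ⟨k, z, hz, hkz⟩ := hnm.2 b hb
  let T : AddSubmonoid ℕ := S.comap (multiplesHom M (a - b))
  have hN : k * n ∈ T := by
    change (k * n) • (a - b) ∈ S
    rw [mul_smul]
    exact S.nsmul_mem hnm.1 k
  have hN1 : k * n + 1 ∈ T := by
    have : (k * n + 1) • (a - b) = z + a := by
      rw [add_smul, one_smul, mul_smul, hkz]
      abel
    change (k * n + 1) • (a - b) ∈ S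
    rw [this]
    exact S.add_mem hz ha
  exact hS.mem_of_eventually_nsmul_mem <| eventually_atTop.2
    ⟨_, fun j hj => Nat.mem_addSubmonoid_of_mul_self_le hN hN1 hj⟩

end AddSubmonoid

/-- If `S` is a semisaturated submonoid of an additive abelian group `M`,
then `Int(S)` is saturated: for every `m` in the subgroup generated by `S` and
every `n ≥ 1`, if `n • m ∈ Int(S)` then `m ∈ Int(S)`. -/
theorem setInterior_saturated_of_semisaturated {M : Type*} [AddCommGroup M]
    (S : AddSubmonoid M)
    (hsemi : ∀ m : M, 2 • m ∈ S → 3 • m ∈ S → m ∈ S) :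
    ∀ m ∈ AddSubgroup.closure (S : Set M), ∀ n : ℕ, 1 ≤ n →
      n • m ∈ setInterior (S : Set M) → m ∈ setInterior (S : Set M) := by
  intro m hm n _ hnm
  have hmS : m ∈ S := AddSubmonoid.IsSemisaturated.mem_of_nsmul_mem_setInterior hsemi hm hnm
  exact mem_setInterior_of_nsmul_mem_setInterior hmS hnm
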